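/- arXiv:1306.3689 — 3 statements merged into one kernel-verified Lean document; each statement's English description precedes it below -/
import Mathlib

section
/- Let r : ℝ → ℝ³ be a differentiable curve and u a unit constant vector such that the unit tangent t(s) = r'(s)/|r'(s)| satisfies t(s)·u = cos ψ for all s, where ψ is a constant with cos ψ ≠ 0. If r is a rational (polynomial) curve whose derivative r' never vanishes, then the speed |r'(s)| is a rational function of s; in particular r'(s)·u = cos ψ · |r'(s)|, so |r'(s)| = (r'(s)·u)/cos ψ is rational. -/
open Polynomial RealInnerProductSpace

theorem norm_eq_inner_div_of_inner_inv_norm_smul_eq {E : Type*} [NormedAddCommGroup E]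
    [InnerProductSpace ℝ E] {v u : E} {c : ℝ} (hc : c ≠ 0) (h : ⟪‖v‖⁻¹ • v, u⟫ = c) :
    ‖v‖ = ⟪v, u⟫ / c := by
  have hv : ‖v‖ ≠ 0 := by
    rintro hv
    exact hc (by simpa [hv] using h.symm)
  rw [real_inner_smul_left] at h
  rw [eq_div_iff hc, ← h]
  field_simp

theorem hasDerivAt_of_forall_apply_eq_eval {ι : Type*} [Fintype ι] {r : ℝ → EuclideanSpace ℝ ι}
    {P : ι → ℝ[X]} (hP : ∀ s i, r s i = (P i).eval s) (s : ℝ) :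
    HasDerivAt r (WithLp.toLp 2 fun i => (P i).derivative.eval s) s := by
  obtain rfl : r = fun s => WithLp.toLp 2 fun i => (P i).eval s := by
    funext s; ext i; simp [hP]
  exact (PiLp.hasFDerivAt_toLp 2 _).comp_hasDerivAt s (hasDerivAt_pi.2 fun i => (P i).hasDerivAt s)

theorem exists_eval_eq_inner_deriv {ι : Type*} [Fintype ι] {r : ℝ → EuclideanSpace ℝ ι}
    {P : ι → ℝ[X]} (hP : ∀ s i, r s i = (P i).eval s) (u : EuclideanSpace ℝ ι) :
    ∃ p : ℝ[X], ∀ s, ⟪deriv r s, u⟫ = p.eval s := by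
  refine ⟨∑ i, C (u i) * (P i).derivative, fun s => ?_⟩
  simp [(hasDerivAt_of_forall_apply_eq_eval hP s).deriv, PiLp.inner_apply, eval_finsetSum]

theorem stmt_2_general (r : ℝ → EuclideanSpace ℝ (Fin 3)) (u : EuclideanSpace ℝ (Fin 3)) (ψ : ℝ)
    (hcos : Real.cos ψ ≠ 0)
    (hangle : ∀ s, ⟪(‖deriv r s‖)⁻¹ • deriv r s, u⟫ = Real.cos ψ)
    (hpoly : ∃ P : Fin 3 → Polynomial ℝ, ∀ s i, r s i = (P i).eval s) :
    (∀ s, ‖deriv r s‖ = ⟪deriv r s, u⟫ / Real.cos ψ) ∧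
      ∃ p q : Polynomial ℝ, (∀ s, q.eval s ≠ 0) ∧
        ∀ s, ‖deriv r s‖ = p.eval s / q.eval s := by
  have hspeed : ∀ s, ‖deriv r s‖ = ⟪deriv r s, u⟫ / Real.cos ψ := fun s =>
    norm_eq_inner_div_of_inner_inv_norm_smul_eq hcos (hangle s)
  obtain ⟨P, hP⟩ := hpoly
  obtain ⟨p, hp⟩ := exists_eval_eq_inner_deriv hP u
  refine ⟨hspeed, C (Real.cos ψ)⁻¹ * p, 1, fun s => by simp, fun s => ?_⟩
  rw [hspeed, hp]
  simp [div_eq_inv_mul]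

/-- Every rational (polynomial) helix is a Pythagorean-hodograph curve: if the unit tangent
of a regular polynomial curve `r` makes a constant angle `ψ` (with `cos ψ ≠ 0`) with a fixed
unit vector `u`, then the speed `‖r'‖` equals `(r'·u)/cos ψ` and is a rational function. -/
theorem stmt_2 (r : ℝ → EuclideanSpace ℝ (Fin 3)) (u : EuclideanSpace ℝ (Fin 3)) (ψ : ℝ)
    (hdiff : Differentiable ℝ r)
    (hreg : ∀ s, deriv r s ≠ 0)
    (hu : ‖u‖ = 1)
    (hcos : Real.cos ψ ≠ 0)
    (hangle : ∀ s, ⟪(‖deriv r s‖)⁻¹ • deriv r s, u⟫ = Real.cos ψ)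
    (hpoly : ∃ P : Fin 3 → Polynomial ℝ, ∀ s i, r s i = (P i).eval s) :
    (∀ s, ‖deriv r s‖ = ⟪deriv r s, u⟫ / Real.cos ψ) ∧
      ∃ p q : Polynomial ℝ, (∀ s, q.eval s ≠ 0) ∧
        ∀ s, ‖deriv r s‖ = p.eval s / q.eval s :=
  stmt_2_general r u ψ hcos hangle hpoly
end

section
/- Let v : ℝ → ℝ³ be a smooth vector field with v, v' linearly independent everywhere, and let r be a smooth curve written as r = a₁ v + a₂ v' + a₃ (v × v') for scalar functions a₁, a₂, a₃. If r'(s) = g(s) v(s) for some scalar g, then a₂ det(v, v', v'') + a₃' |v × v'|² + a₃ (v × v')·(v × v'') = 0. -/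
open Matrix RealInnerProductSpace

/-- The cross product of two vectors in ℝ³ (viewed as Euclidean space). -/
noncomputable def cross3 (v w : EuclideanSpace ℝ (Fin 3)) : EuclideanSpace ℝ (Fin 3) :=
  WithLp.toLp 2 (crossProduct v w)

noncomputable def crossL : EuclideanSpace ℝ (Fin 3) →L[ℝ] EuclideanSpace ℝ (Fin 3) →L[ℝ]
    EuclideanSpace ℝ (Fin 3) :=
  LinearMap.toContinuousLinearMap <|
  { toFun := fun x => LinearMap.toContinuousLinearMap
      (show EuclideanSpace ℝ (Fin 3) →ₗ[ℝ] EuclideanSpace ℝ (Fin 3) from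
        { toFun := fun w => cross3 x w
          map_add' := by intro a b; simp [cross3, map_add]
          map_smul' := by intro c a; simp [cross3, LinearMap.map_smul] })
    map_add' := by
      intro x y
      ext w i
      simp [cross3, map_add]
    map_smul' := by
      intro c x
      ext w i
      simp [cross3, LinearMap.map_smul] }

lemma crossL_apply (x y : EuclideanSpace ℝ (Fin 3)) : crossL x y = cross3 x y := rfl

lemma inner_cross_left (x y : EuclideanSpace ℝ (Fin 3)) : ⟪cross3 x y, x⟫ = 0 := by
  simp [cross3, crossProduct, PiLp.inner_apply, Fin.sum_univ_three]
  ring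

lemma inner_cross_right (x y : EuclideanSpace ℝ (Fin 3)) : ⟪cross3 x y, y⟫ = 0 := by
  simp [cross3, crossProduct, PiLp.inner_apply, Fin.sum_univ_three]
  ring

lemma cross3_self (x : EuclideanSpace ℝ (Fin 3)) : cross3 x x = 0 := by
  simp [cross3]

/-- Equation (14): if r = a₁ v + a₂ v' + a₃ (v × v') and r' = g v, then
a₂ det(v, v', v'') + a₃' |v × v'|² + a₃ (v × v')·(v × v'') = 0. -/
theorem stmt_8 (v r : ℝ → EuclideanSpace ℝ (Fin 3)) (g a₁ a₂ a₃ : ℝ → ℝ)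
    (hv : ContDiff ℝ (⊤ : ℕ∞) v) (hr : ContDiff ℝ (⊤ : ℕ∞) r)
    (ha₁ : Differentiable ℝ a₁) (ha₂ : Differentiable ℝ a₂) (ha₃ : Differentiable ℝ a₃)
    (hindep : ∀ s, LinearIndependent ℝ ![v s, deriv v s])
    (hexp : ∀ s, r s = a₁ s • v s + a₂ s • deriv v s + a₃ s • cross3 (v s) (deriv v s))
    (htang : ∀ s, deriv r s = g s • v s) :
    ∀ s, a₂ s * ⟪cross3 (v s) (deriv v s), deriv (deriv v) s⟫ +
        deriv a₃ s * ‖cross3 (v s) (deriv v s)‖ ^ 2 +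
        a₃ s * ⟪cross3 (v s) (deriv v s), cross3 (v s) (deriv (deriv v) s)⟫ = 0 := by
  intro s
  have hv' : ContDiff ℝ (⊤ : ℕ∞) (deriv v) := (contDiff_infty_iff_deriv.mp (hv.of_le (by simp))).2
  have hv1 : HasDerivAt v (deriv v s) s := (hv.differentiable (by simp) s).hasDerivAt
  have hv2 : HasDerivAt (deriv v) (deriv (deriv v) s) s :=
    (hv'.differentiable (by simp) s).hasDerivAt
  have h1 : HasDerivAt (fun t => a₁ t • v t)
      (a₁ s • deriv v s + deriv a₁ s • v s) s := ((ha₁ s).hasDerivAt).smul hv1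
  have h2 : HasDerivAt (fun t => a₂ t • deriv v t)
      (a₂ s • deriv (deriv v) s + deriv a₂ s • deriv v s) s := ((ha₂ s).hasDerivAt).smul hv2
  have hc : HasDerivAt (fun t => crossL (v t)) (crossL (deriv v s)) s :=
    crossL.hasFDerivAt.comp_hasDerivAt s hv1
  have hcc : HasDerivAt (fun t => crossL (v t) (deriv v t))
      (crossL (deriv v s) (deriv v s) + crossL (v s) (deriv (deriv v) s)) s :=
    hc.clm_apply hv2
  have h3 : HasDerivAt (fun t => a₃ t • cross3 (v t) (deriv v t))
      (a₃ s • (cross3 (deriv v s) (deriv v s) + cross3 (v s) (deriv (deriv v) s)) +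
        deriv a₃ s • cross3 (v s) (deriv v s)) s := by
    exact ((ha₃ s).hasDerivAt).smul hcc
  have hR : HasDerivAt r
      (a₁ s • deriv v s + deriv a₁ s • v s +
        (a₂ s • deriv (deriv v) s + deriv a₂ s • deriv v s) +
        (a₃ s • (cross3 (deriv v s) (deriv v s) + cross3 (v s) (deriv (deriv v) s)) +
          deriv a₃ s • cross3 (v s) (deriv v s))) s := by
    have := (h1.add h2).add h3
    exact this.congr_of_eventuallyEq (Filter.Eventually.of_forall fun t => (hexp t))
  have heq := (htang s).symm.trans hR.deriv
  have hinner := congrArg (fun x => ⟪cross3 (v s) (deriv v s), x⟫) heq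
  simp only [inner_add_right, real_inner_smul_right, inner_cross_left, inner_cross_right,
    cross3_self, inner_zero_right, real_inner_self_eq_norm_sq, mul_zero, add_zero,
    zero_add] at hinner
  linarith
end

section
/- For real constants m ≠ 0 and n ≠ 0, there do not exist linear real polynomials a(s) = n₂ s + n₃ and b(s) = n₄ s + n₅, not both zero, satisfying (a(s) b'(s) − a'(s) b(s)) / (a(s)² + b(s)²) = m n / (1 + n² + m² s²) for all s. -/
/-!
The numerator `a b' - a' b` of a pair of linear polynomials is the constant `C = n₃n₄ - n₂n₅`,
so clearing denominators turns the equation into an identity of quadratic polynomials in `s`: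
`C m² = mn A`, `P = 0`, `C (1 + n²) = mn B`, where `A = n₂² + n₄²`, `B = n₃² + n₅²` and
`P = n₂n₃ + n₄n₅`. Lagrange's identity `C² + P² = AB` then gives `C² = AB`, and multiplying the
two outer equations yields `C² m² (1 + n²) = m²n² C²`, i.e. `C = 0`; hence `A = B = 0` and all
coefficients vanish.
-/

theorem ne_zero_of_div_eq_div {G₀ : Type*} [GroupWithZero G₀] {a b c d : G₀} (hc : c ≠ 0)
    (hd : d ≠ 0) (h : a / b = c / d) : b ≠ 0 := by
  rintro rfl
  exact div_ne_zero hc hd (by simpa using h.symm)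

theorem quadratic_coeffs_eq_zero {K : Type*} [Field K] [CharZero K] {a b c : K}
    (h : ∀ x, a * x ^ 2 + b * x + c = 0) : a = 0 ∧ b = 0 ∧ c = 0 := by
  have h₀ := h 0
  have h₁ := h 1
  have h₂ := h (-1)
  have hc : c = 0 := by simpa using h₀
  have ha : 2 * a = 0 := by linear_combination h₁ + h₂ - 2 * h₀
  have hb : 2 * b = 0 := by linear_combination h₁ - h₂
  simp_all

theorem eq_zero_of_rrmf_coeffs {K : Type*} [Field K] {m n A B C : K} (hm : m ≠ 0) (hn : n ≠ 0)
    (hAB : C ^ 2 = A * B) (hA : C * m ^ 2 = m * n * A) (hB : C * (1 + n ^ 2) = m * n * B) :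
    A = 0 ∧ B = 0 := by
  have hCm : (C * m) ^ 2 = 0 := by
    linear_combination (C * (1 + n ^ 2)) * hA + (m * n * A) * hB - m ^ 2 * n ^ 2 * hAB
  have hC : C = 0 := by simpa [hm] using hCm
  subst hC
  constructor
  · simpa [hm, hn] using hA.symm
  · simpa [hm, hn] using hB.symm

/-- Nonexistence of linear polynomial solutions a(s) = n₂s + n₃, b(s) = n₄s + n₅, not both
zero, of the RRMF equation (a b' − a' b)/(a² + b²) = mn/(1 + n² + m²s²) for all s. -/
theorem stmt_12 (m n : ℝ) (hm : m ≠ 0) (hn : n ≠ 0) :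
    ¬ ∃ n₂ n₃ n₄ n₅ : ℝ, (¬ (n₂ = 0 ∧ n₃ = 0 ∧ n₄ = 0 ∧ n₅ = 0)) ∧
      ∀ s : ℝ, ((n₂ * s + n₃) * n₄ - n₂ * (n₄ * s + n₅)) /
          ((n₂ * s + n₃) ^ 2 + (n₄ * s + n₅) ^ 2) =
        m * n / (1 + n ^ 2 + m ^ 2 * s ^ 2) := by
  rintro ⟨n₂, n₃, n₄, n₅, hne, heq⟩
  set C := n₃ * n₄ - n₂ * n₅
  set A := n₂ * n₂ + n₄ * n₄
  set B := n₃ * n₃ + n₅ * n₅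
  set P := n₂ * n₃ + n₄ * n₅
  have hpoly : ∀ s : ℝ, (m * n * A - C * m ^ 2) * s ^ 2 + (2 * m * n * P) * s
      + (m * n * B - C * (1 + n ^ 2)) = 0 := fun s => by
    have hE : 1 + n ^ 2 + m ^ 2 * s ^ 2 ≠ 0 := by positivity
    have hD := ne_zero_of_div_eq_div (mul_ne_zero hm hn) hE (heq s)
    linear_combination -(mul_eq_mul_of_div_eq_div _ _ hD hE (heq s))
  obtain ⟨hA, hP, hB⟩ := quadratic_coeffs_eq_zero hpoly
  have hP : P = 0 := by simpa [hm, hn] using hP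
  have hAB : C ^ 2 = A * B := by linear_combination -P * hP
  obtain ⟨hA, hB⟩ :=
    eq_zero_of_rrmf_coeffs hm hn hAB (by linear_combination -hA) (by linear_combination -hB)
  obtain ⟨h₂, h₄⟩ := mul_self_add_mul_self_eq_zero.1 hA
  obtain ⟨h₃, h₅⟩ := mul_self_add_mul_self_eq_zero.1 hB
  exact hne ⟨h₂, h₃, h₄, h₅⟩
end
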